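/- arXiv:2410.07452 — 3 statements merged into one kernel-verified Lean document; each statement's English description precedes it below -/
import Mathlib

section
/- Let X ⊂ ℝ^n be finite with conv(X) k-dimensional and x in its relative interior. Let k' be the largest dimension of a simplex with vertices in X having x in its relative interior. Then there exists Y ⊆ X with |Y| ≤ 2k − k' + 1 such that conv(Y) is k-dimensional and x lies in the relative interior of conv(Y). -/
/-!
A point `x` lies in the relative interior of `conv Y` exactly when it is a convex combination of
all of `Y` with strictly positive weights. Starting from the `k'`-simplex, enlarge `Y ⊆ X` while
keeping `x` in the relative interior of `conv Y`: project along `V = vectorSpan Y`; the points of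
`X` leaving `V` still have the image of `x` in their convex hull, so Carathéodory in `E ⧸ V` gives
`t ≥ 2` of them whose images form a simplex around the image of `x`. Adjoining them keeps `x` in
the relative interior and raises the dimension by `t - 1 ≥ t / 2`, so reaching dimension `k` costs
at most `2 (k - k')` points.
-/

/-- `SimplexIn n X x m` means there is an `m`-dimensional simplex with vertices in `X`
(i.e. the convex hull of `m + 1` affinely independent points of `X`) having `x` in its
relative interior. -/
def SimplexIn (n : ℕ) (X : Finset (Fin n → ℝ)) (x : Fin n → ℝ) (m : ℕ) : Prop :=
  ∃ W ⊆ X, W.card = m + 1 ∧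
    AffineIndependent ℝ (fun p : (W : Set (Fin n → ℝ)) => (p : Fin n → ℝ)) ∧
    x ∈ intrinsicInterior ℝ (convexHull ℝ (W : Set (Fin n → ℝ)))

open Finset Module Filter Topology

section Combination

variable {E F : Type*} [AddCommGroup E] [Module ℝ E] [AddCommGroup F] [Module ℝ F]

def IsPosCombination (Y : Finset E) (x : E) : Prop :=
  ∃ w : E → ℝ, (∀ y ∈ Y, 0 < w y) ∧ ∑ y ∈ Y, w y = 1 ∧ ∑ y ∈ Y, w y • y = x

theorem IsPosCombination.mem_convexHull {Y : Finset E} {x : E} (h : IsPosCombination Y x) :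
    x ∈ convexHull ℝ (Y : Set E) := by
  obtain ⟨w, hw, hw1, hwx⟩ := h
  exact Finset.mem_convexHull'.2 ⟨w, fun y hy => (hw y hy).le, hw1, hwx⟩

theorem isPosCombination_centroid {Y : Finset E} (hY : Y.Nonempty) :
    IsPosCombination Y (Y.centroid ℝ id) := by
  refine ⟨Y.centroidWeights ℝ, fun _ _ => ?_, Y.sum_centroidWeights_eq_one_of_nonempty ℝ hY, ?_⟩
  · simp [Finset.centroidWeights_apply, hY.card_pos]
  · rw [Finset.centroid_def, Finset.affineCombination_eq_linear_combination _ _ _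
      (Y.sum_centroidWeights_eq_one_of_nonempty ℝ hY)]
    rfl

theorem exists_subset_isPosCombination_of_mem_convexHull {Y : Finset E} {x : E}
    (hx : x ∈ convexHull ℝ (Y : Set E)) : ∃ Y₀ ⊆ Y, IsPosCombination Y₀ x := by
  classical
  obtain ⟨w, hw, hw1, hwx⟩ := Finset.mem_convexHull'.1 hx
  refine ⟨Y.filter (0 < w ·), filter_subset _ _, w, fun y hy => (mem_filter.1 hy).2, ?_, ?_⟩
  · rw [sum_filter_of_ne fun y hy hne => (hw y hy).lt_of_ne' hne, hw1]
  · rw [sum_filter_of_ne fun y hy hne => (hw y hy).lt_of_ne' (left_ne_zero_of_smul hne), hwx]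

theorem IsPosCombination.union_of_mem_openSegment [DecidableEq E] {Y T : Finset E} {p q z : E}
    (hp : IsPosCombination Y p) (hq : IsPosCombination T q) (hz : z ∈ openSegment ℝ p q) :
    IsPosCombination (Y ∪ T) z := by
  obtain ⟨u, hu, hu1, hup⟩ := hp
  obtain ⟨v, hv, hv1, hvq⟩ := hq
  obtain ⟨a, b, ha, hb, hab, rfl⟩ := hz
  set u' : E → ℝ := fun y => if y ∈ Y then u y else 0
  set v' : E → ℝ := fun y => if y ∈ T then v y else 0
  have hu' : ∀ y, 0 ≤ u' y := fun y => by
    by_cases hy : y ∈ Y <;> simp [u', hy, (hu y _).le]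
  have hv' : ∀ y, 0 ≤ v' y := fun y => by
    by_cases hy : y ∈ T <;> simp [v', hy, (hv y _).le]
  refine ⟨fun y => a * u' y + b * v' y, fun y hy => ?_, ?_, ?_⟩
  · rcases mem_union.1 hy with hy | hy
    · have : 0 < u' y := by simp [u', hy, hu y hy]
      have := hv' y
      positivity
    · have : 0 < v' y := by simp [v', hy, hv y hy]
      have := hu' y
      positivity
  · simp only [u', v', sum_add_distrib, ← mul_sum, sum_ite_mem, union_inter_cancel_left,
      union_inter_cancel_right, hu1, hv1, mul_one, hab]
  · simp only [u', v', add_smul, sum_add_distrib, mul_smul, ← smul_sum, ite_smul, zero_smul,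
      sum_ite_mem, union_inter_cancel_left, union_inter_cancel_right, hup, hvq]

theorem IsPosCombination.eventually_add_smul_sub {Y : Finset E} {x p : E}
    (hx : IsPosCombination Y x) (hp : p ∈ convexHull ℝ (Y : Set E)) :
    ∀ᶠ t in 𝓝 (0 : ℝ), IsPosCombination Y (x + t • (x - p)) := by
  obtain ⟨b, hb, hb1, hbx⟩ := hx
  obtain ⟨a, -, ha1, hap⟩ := Finset.mem_convexHull'.1 hp
  have hpos : ∀ y ∈ Y, ∀ᶠ t in 𝓝 (0 : ℝ), 0 < b y + t * (b y - a y) := fun y hy =>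
    (Continuous.tendsto (by fun_prop) 0).eventually_const_lt (by simpa using hb y hy)
  filter_upwards [(Finset.eventually_all Y).2 hpos] with t ht
  refine ⟨fun y => b y + t * (b y - a y), ht, ?_, ?_⟩
  · simp only [sum_add_distrib, ← mul_sum, sum_sub_distrib, hb1, ha1]
    ring
  · simp only [add_smul, mul_smul, sub_smul, sum_add_distrib, ← smul_sum, sum_sub_distrib, hbx,
      hap]

theorem IsPosCombination.exists_preimage [DecidableEq F] (f : E →ₗ[ℝ] F) {T : Finset E} {q : F}
    (hf : Set.InjOn f T) (h : IsPosCombination (T.image f) q) :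
    ∃ p, IsPosCombination T p ∧ f p = q := by
  obtain ⟨w, hw, hw1, hwq⟩ := h
  refine ⟨∑ t ∈ T, w (f t) • t, ⟨w ∘ f, fun t ht => hw _ (mem_image_of_mem f ht), ?_, rfl⟩, ?_⟩
  · rwa [sum_image hf] at hw1
  · rw [map_sum]
    simp_rw [map_smul]
    rwa [sum_image hf] at hwq

theorem IsPosCombination.two_le_card {T : Finset E} {p : E} (h : IsPosCombination T p)
    (hp : p ∉ T) : 2 ≤ #T := by
  obtain ⟨w, -, hw1, hwp⟩ := h
  by_contra! hlt
  obtain ⟨a, hTa⟩ := card_le_one_iff_subset_singleton.1 (Nat.le_of_lt_succ hlt)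
  obtain rfl | rfl := subset_singleton_iff.1 hTa
  · simp at hw1
  · simp_all

theorem IsPosCombination.map_mem_convexHull_image_filter_ne [DecidableEq F] (f : E →ₗ[ℝ] F)
    {X : Finset E} {x : E} (hX : IsPosCombination X x) (hne : ∃ y ∈ X, f y ≠ f x) :
    f x ∈ convexHull ℝ (((X.filter (f · ≠ f x)).image f : Finset F) : Set F) := by
  obtain ⟨c, hc, hc1, hcx⟩ := hX
  set Z := X.filter (f · ≠ f x)
  have hZ : ∑ y ∈ Z, c y • (f y - f x) = 0 := by
    rw [sum_filter_of_ne fun y _ h => by simpa [sub_eq_zero] using right_ne_zero_of_smul h]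
    simp only [smul_sub, sum_sub_distrib, ← sum_smul, hc1, one_smul, ← map_smul, ← map_sum, hcx,
      sub_self]
  have hσ : 0 < ∑ y ∈ Z, c y := by
    obtain ⟨y, hy, hfy⟩ := hne
    exact sum_pos (fun y hy => hc y (mem_filter.1 hy).1) ⟨y, mem_filter.2 ⟨hy, hfy⟩⟩
  have hcm : Z.centerMass c f = f x := by
    rw [Finset.centerMass, inv_smul_eq_iff₀ hσ.ne', sum_smul]
    simpa [smul_sub, sum_sub_distrib, sub_eq_zero] using hZ
  rw [← hcm, coe_image]
  exact Z.centerMass_mem_convexHull (fun y hy => (hc y (mem_filter.1 hy).1).le) hσ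
    fun y hy => Set.mem_image_of_mem f hy

theorem exists_affineIndependent_isPosCombination {S : Finset E} {p : E}
    (hp : p ∈ convexHull ℝ (S : Set E)) :
    ∃ T ⊆ S, AffineIndependent ℝ ((↑) : T → E) ∧ IsPosCombination T p := by
  obtain ⟨T, hTt, hT⟩ := exists_subset_isPosCombination_of_mem_convexHull
    (Caratheodory.mem_minCardFinsetOfMemConvexHull hp)
  refine ⟨T, ?_, ?_, hT⟩
  · exact_mod_cast (coe_subset.2 hTt).trans (Caratheodory.minCardFinsetOfMemConvexHull_subseteq hp)
  · exact (Caratheodory.affineIndependent_minCardFinsetOfMemConvexHull hp).mono (coe_subset.2 hTt)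

theorem mem_openSegment_add_smul_sub (x p : E) {t : ℝ} (ht : 0 < t) :
    x ∈ openSegment ℝ (x + t • (x - p)) p := by
  refine ⟨(1 + t)⁻¹, t / (1 + t), by positivity, by positivity, by field_simp, ?_⟩
  rw [div_eq_inv_mul, mul_smul, ← smul_add, inv_smul_eq_iff₀ (by positivity)]
  module

end Combination

section Intrinsic

variable {E : Type*} [NormedAddCommGroup E] [NormedSpace ℝ E]

theorem eventually_add_smul_mem_intrinsicInterior {s : Set E} {x v : E}
    (hx : x ∈ intrinsicInterior ℝ s) (hv : v ∈ vectorSpan ℝ s) :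
    ∀ᶠ t in 𝓝 (0 : ℝ), x + t • v ∈ intrinsicInterior ℝ s := by
  obtain ⟨x', hx', rfl⟩ := mem_intrinsicInterior.1 hx
  rw [← direction_affineSpan] at hv
  have hmem (t : ℝ) : x' + t • v ∈ affineSpan ℝ s := by
    rw [add_comm]
    exact AffineSubspace.vadd_mem_of_mem_direction ((affineSpan ℝ s).direction.smul_mem t hv) x'.2
  let γ : ℝ → affineSpan ℝ s := fun t => ⟨x' + t • v, hmem t⟩
  have hγ : Continuous γ := by fun_prop
  have h0 : γ 0 = x' := by ext; simp [γ]
  filter_upwards [hγ.continuousAt.preimage_mem_nhds (h0 ▸ isOpen_interior.mem_nhds hx')]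
    with t ht
  exact mem_intrinsicInterior.2 ⟨γ t, ht, rfl⟩

theorem Convex.openSegment_self_intrinsicInterior_subset_intrinsicInterior {s : Set E}
    (hs : Convex ℝ s) {q p : E} (hq : q ∈ s) (hp : p ∈ intrinsicInterior ℝ s) :
    openSegment ℝ q p ⊆ intrinsicInterior ℝ s := by
  rw [openSegment_eq_image_lineMap]
  rintro - ⟨θ, ⟨hθ0, hθ1⟩, rfl⟩
  obtain ⟨p', hp', rfl⟩ := mem_intrinsicInterior.1 hp
  have hqA : q ∈ affineSpan ℝ s := subset_affineSpan ℝ s hq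
  -- the homothety with centre `q` sending the point of the segment to `p`
  let g : affineSpan ℝ s → affineSpan ℝ s := fun z =>
    ⟨AffineMap.lineMap q (z : E) θ⁻¹, AffineMap.lineMap_mem _ hqA z.2⟩
  have hg : Continuous g := by
    refine Continuous.subtype_mk ?_ _
    simp only [AffineMap.lineMap_apply]
    fun_prop
  let z : affineSpan ℝ s := ⟨AffineMap.lineMap q (p' : E) θ, AffineMap.lineMap_mem _ hqA p'.2⟩
  have hgz : g z = p' := by ext; simp [g, z, hθ0.ne']
  have hsub : g ⁻¹' interior (Subtype.val ⁻¹' s) ⊆ Subtype.val ⁻¹' s := fun w hw => by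
    have := hs.lineMap_mem hq (interior_subset (s := Subtype.val ⁻¹' s) hw) ⟨hθ0.le, hθ1.le⟩
    simpa [g, hθ0.ne'] using this
  refine mem_intrinsicInterior.2 ⟨z, interior_maximal hsub (isOpen_interior.preimage hg) ?_, rfl⟩
  rwa [Set.mem_preimage, hgz]

theorem IsPosCombination.of_mem_intrinsicInterior {Y : Finset E} {x : E}
    (hx : x ∈ intrinsicInterior ℝ (convexHull ℝ (Y : Set E))) : IsPosCombination Y x := by
  classical
  have hY : Y.Nonempty := by
    rw [← coe_nonempty, ← convexHull_nonempty_iff (𝕜 := ℝ)]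
    exact ⟨x, intrinsicInterior_subset hx⟩
  have hc := isPosCombination_centroid hY
  set c := Y.centroid ℝ id
  have hv : x - c ∈ vectorSpan ℝ (convexHull ℝ (Y : Set E)) :=
    vsub_mem_vectorSpan ℝ (intrinsicInterior_subset hx) hc.mem_convexHull
  obtain ⟨t, ht0, ht⟩ := (eventually_add_smul_mem_intrinsicInterior hx hv).exists_gt
  obtain ⟨Y₀, hY₀, hz⟩ :=
    exists_subset_isPosCombination_of_mem_convexHull (intrinsicInterior_subset ht)
  simpa [union_eq_right.2 hY₀] using
    hz.union_of_mem_openSegment hc (mem_openSegment_add_smul_sub x c ht0)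

variable [FiniteDimensional ℝ E]

theorem IsPosCombination.mem_intrinsicInterior {Y : Finset E} {x : E}
    (hx : IsPosCombination Y x) : x ∈ intrinsicInterior ℝ (convexHull ℝ (Y : Set E)) := by
  have hconv := convex_convexHull ℝ (Y : Set E)
  obtain ⟨p, hp⟩ := Set.Nonempty.intrinsicInterior hconv ⟨x, hx.mem_convexHull⟩
  obtain ⟨t, ht0, ht⟩ := (hx.eventually_add_smul_sub (intrinsicInterior_subset hp)).exists_gt
  exact hconv.openSegment_self_intrinsicInterior_subset_intrinsicInterior ht.mem_convexHull hp
    (mem_openSegment_add_smul_sub x p ht0)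

theorem mem_intrinsicInterior_convexHull_union [DecidableEq E] {Y T : Finset E} {x p : E}
    (hx : x ∈ intrinsicInterior ℝ (convexHull ℝ (Y : Set E))) (hp : IsPosCombination T p)
    (hpx : p - x ∈ vectorSpan ℝ (Y : Set E)) :
    x ∈ intrinsicInterior ℝ (convexHull ℝ ((Y ∪ T : Finset E) : Set E)) := by
  have hv : x - p ∈ vectorSpan ℝ (convexHull ℝ (Y : Set E)) := by
    rw [← direction_affineSpan, affineSpan_convexHull, direction_affineSpan, ← neg_sub]
    exact neg_mem hpx
  obtain ⟨t, ht0, ht⟩ := (eventually_add_smul_mem_intrinsicInterior hx hv).exists_gt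
  exact ((IsPosCombination.of_mem_intrinsicInterior ht).union_of_mem_openSegment hp
    (mem_openSegment_add_smul_sub x p ht0)).mem_intrinsicInterior

end Intrinsic

theorem Finset.exists_subset_injOn_image_eq {α β : Type*} [DecidableEq β] {f : α → β}
    {s : Finset α} {t : Finset β} (h : t ⊆ s.image f) :
    ∃ u ⊆ s, Set.InjOn f u ∧ u.image f = t := by
  obtain ⟨u, hus, hinj, hu⟩ := Set.SurjOn.exists_subset_injOn_image_eq (s := (s : Set α))
    (t := (t : Set β)) (f := f) (by rw [Set.SurjOn, ← coe_image]; exact_mod_cast h)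
  lift u to Finset α using s.finite_toSet.subset hus
  exact ⟨u, by exact_mod_cast hus, hinj, by exact_mod_cast hu⟩

theorem finrank_add_finrank_vectorSpan_image_mkQ_le {K V : Type*} [DivisionRing K]
    [AddCommGroup V] [Module K V] [FiniteDimensional K V] {N W : Submodule K V} {s : Set V}
    (hN : N ≤ W) (hs : vectorSpan K s ≤ W) :
    finrank K N + finrank K (vectorSpan K (N.mkQ '' s)) ≤ finrank K W := by
  have hrank := LinearMap.finrank_range_add_finrank_ker (N.mkQ.domRestrict W)
  rw [LinearMap.range_domRestrict, LinearMap.ker_domRestrict, Submodule.ker_mkQ,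
    (Submodule.comapSubtypeEquivOfLe hN).finrank_eq] at hrank
  have hmap : vectorSpan K (N.mkQ '' s) ≤ W.map N.mkQ := by
    rw [← LinearMap.coe_toAffineMap, ← AffineMap.map_vectorSpan]
    exact Submodule.map_mono hs
  have := Submodule.finrank_mono hmap
  omega

section Steinitz

variable {E : Type*} [NormedAddCommGroup E] [NormedSpace ℝ E] [FiniteDimensional ℝ E]

theorem exists_finrank_vectorSpan_lt_of_ne {X Y : Finset E} {x : E} (hYX : Y ⊆ X)
    (hX : x ∈ intrinsicInterior ℝ (convexHull ℝ (X : Set E)))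
    (hY : x ∈ intrinsicInterior ℝ (convexHull ℝ (Y : Set E)))
    (hne : vectorSpan ℝ (Y : Set E) ≠ vectorSpan ℝ (X : Set E)) :
    ∃ Y' ⊆ X, x ∈ intrinsicInterior ℝ (convexHull ℝ (Y' : Set E)) ∧
      finrank ℝ (vectorSpan ℝ (Y : Set E)) < finrank ℝ (vectorSpan ℝ (Y' : Set E)) ∧
      #Y' + 2 * finrank ℝ (vectorSpan ℝ (Y : Set E)) ≤
        #Y + 2 * finrank ℝ (vectorSpan ℝ (Y' : Set E)) := by
  classical
  set V := vectorSpan ℝ (Y : Set E)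
  set π := V.mkQ
  have hout : ∃ y ∈ X, π y ≠ π x := by
    by_contra! hconst
    refine hne (le_antisymm (vectorSpan_mono ℝ (coe_subset.2 hYX)) ?_)
    rw [vectorSpan_def, Submodule.span_le]
    rintro - ⟨y, hy, y', hy', rfl⟩
    exact (Submodule.Quotient.eq V).1 ((hconst y hy).trans (hconst y' hy').symm)
  obtain ⟨T', hT'X, hT'ind, hT'⟩ := exists_affineIndependent_isPosCombination
    ((IsPosCombination.of_mem_intrinsicInterior hX).map_mem_convexHull_image_filter_ne π hout)
  obtain ⟨T, hTX, hTinj, rfl⟩ := Finset.exists_subset_injOn_image_eq hT'X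
  obtain ⟨p, hp, hpx⟩ := hT'.exists_preimage π hTinj
  have hcard : 2 ≤ #(T.image π) := hT'.two_le_card fun hx => by
    obtain ⟨y, hy, hyx⟩ := mem_image.1 (hT'X hx)
    exact (mem_filter.1 hy).2 hyx
  have hT'dim : finrank ℝ (vectorSpan ℝ (π '' T)) + 1 = #(T.image π) := by
    have := hT'ind.finrank_vectorSpan (n := #(T.image π) - 1) (by simp; omega)
    have hrange : Set.range ((↑) : T.image π → E ⧸ V) = π '' T := by ext; simp
    rw [hrange] at this
    omega
  have hdim : finrank ℝ V + finrank ℝ (vectorSpan ℝ (π '' T)) ≤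
      finrank ℝ (vectorSpan ℝ ((Y ∪ T : Finset E) : Set E)) :=
    finrank_add_finrank_vectorSpan_image_mkQ_le
    (vectorSpan_mono ℝ (coe_subset.2 subset_union_left))
    (vectorSpan_mono ℝ (coe_subset.2 (subset_union_right (s₁ := Y))))
  refine ⟨Y ∪ T, union_subset hYX (hTX.trans (filter_subset _ _)),
    mem_intrinsicInterior_convexHull_union hY hp ((Submodule.Quotient.eq V).1 hpx), ?_⟩
  have := card_union_le Y T
  have := card_image_of_injOn hTinj
  omega

theorem exists_finrank_vectorSpan_eq_card_add_two_mul_finrank_le {X Y : Finset E} {x : E}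
    (hYX : Y ⊆ X) (hX : x ∈ intrinsicInterior ℝ (convexHull ℝ (X : Set E)))
    (hY : x ∈ intrinsicInterior ℝ (convexHull ℝ (Y : Set E))) :
    ∃ Y' ⊆ X, x ∈ intrinsicInterior ℝ (convexHull ℝ (Y' : Set E)) ∧
      finrank ℝ (vectorSpan ℝ (Y' : Set E)) = finrank ℝ (vectorSpan ℝ (X : Set E)) ∧
      #Y' + 2 * finrank ℝ (vectorSpan ℝ (Y : Set E)) ≤
        #Y + 2 * finrank ℝ (vectorSpan ℝ (X : Set E)) := by
  induction hd : finrank ℝ (vectorSpan ℝ (X : Set E)) - finrank ℝ (vectorSpan ℝ (Y : Set E))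
    using Nat.strong_induction_on generalizing Y with
  | _ d ih =>
  by_cases hYX' : vectorSpan ℝ (Y : Set E) = vectorSpan ℝ (X : Set E)
  · exact ⟨Y, hYX, hY, by rw [hYX'], by rw [hYX']⟩
  obtain ⟨Y', hY'X, hY', hlt, hcard⟩ := exists_finrank_vectorSpan_lt_of_ne hYX hX hY hYX'
  have hle := Submodule.finrank_mono (vectorSpan_mono ℝ (coe_subset.2 hY'X))
  obtain ⟨Z, hZX, hZ, hZdim, hZcard⟩ := ih _ (by omega) hY'X hY' rfl
  exact ⟨Z, hZX, hZ, hZdim, by omega⟩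

end Steinitz

theorem steinitz_simplex_refinement_general (n k k' : ℕ) (X : Finset (Fin n → ℝ)) (x : Fin n → ℝ)
    (hdim : Module.finrank ℝ (vectorSpan ℝ (X : Set (Fin n → ℝ))) = k)
    (hx : x ∈ intrinsicInterior ℝ (convexHull ℝ (X : Set (Fin n → ℝ))))
    (hk' : SimplexIn n X x k') :
    ∃ Y ⊆ X, Y.card ≤ 2 * k - k' + 1 ∧
      Module.finrank ℝ (vectorSpan ℝ (Y : Set (Fin n → ℝ))) = k ∧
      x ∈ intrinsicInterior ℝ (convexHull ℝ (Y : Set (Fin n → ℝ))) := by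
  obtain ⟨W, hWX, hWcard, hWind, hWx⟩ := hk'
  have hW : finrank ℝ (vectorSpan ℝ (W : Set (Fin n → ℝ))) = k' := by
    have := hWind.finrank_vectorSpan (n := k') (by simp [hWcard])
    rwa [Subtype.range_coe] at this
  have hk'k : k' ≤ k := hdim ▸ hW ▸ Submodule.finrank_mono (vectorSpan_mono ℝ (coe_subset.2 hWX))
  obtain ⟨Y, hYX, hY, hYdim, hYcard⟩ :=
    exists_finrank_vectorSpan_eq_card_add_two_mul_finrank_le hWX hx hWx
  exact ⟨Y, hYX, by omega, hYdim.trans hdim, hY⟩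

/-- **Bonnice–Reay type refinement of Steinitz' theorem.** If `conv(X)` is `k`-dimensional
with `x` in its relative interior, and `k'` is the largest dimension of a simplex with
vertices in `X` having `x` in its relative interior, then some `Y ⊆ X` with
`|Y| ≤ 2k - k' + 1` has `conv(Y)` `k`-dimensional with `x` in its relative interior. -/
theorem steinitz_simplex_refinement (n k k' : ℕ) (X : Finset (Fin n → ℝ)) (x : Fin n → ℝ)
    (hdim : Module.finrank ℝ (vectorSpan ℝ (X : Set (Fin n → ℝ))) = k)
    (hx : x ∈ intrinsicInterior ℝ (convexHull ℝ (X : Set (Fin n → ℝ))))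
    (hk' : SimplexIn n X x k') (hk'max : ∀ m, SimplexIn n X x m → m ≤ k') :
    ∃ Y ⊆ X, Y.card ≤ 2 * k - k' + 1 ∧
      Module.finrank ℝ (vectorSpan ℝ (Y : Set (Fin n → ℝ))) = k ∧
      x ∈ intrinsicInterior ℝ (convexHull ℝ (Y : Set (Fin n → ℝ))) :=
  steinitz_simplex_refinement_general n k k' X x hdim hx hk'
end

section
/- A finite matroid M has a circuit decomposition (a sequence of circuits C_1,...,C_t satisfying (E1) C_i − D_{i−1} ≠ ∅ and (E2) minimality of the lobes, with D_t = E) if and only if M has no bridges. Moreover, if M is bridgeless then every partial circuit decomposition extends to a circuit decomposition. -/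
/-- The rank of a set in a matroid: the size of a largest independent subset. -/
noncomputable def Matroid.rankOf {α : Type*} (M : Matroid α) (X : Set α) : ℕ :=
  sSup {n | ∃ I, I ⊆ X ∧ M.Indep I ∧ I.ncard = n}

/-- A circuit of a matroid is a minimal dependent set. -/
def Matroid.IsCircuitSet {α : Type*} (M : Matroid α) (C : Set α) : Prop :=
  M.Dep C ∧ ∀ D ⊂ C, M.Indep D

/-- `D j = C 0 ∪ ⋯ ∪ C (j-1)`, the union of the first `j` circuits of a sequence. -/
def circUnion {α : Type*} (C : ℕ → Set α) (j : ℕ) : Set α := ⋃ i < j, C i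

/-- `(C 0, …, C (t-1))` is a partial circuit decomposition of `M`: every `C i` is a
circuit, and for `i ≥ 1` the lobe `C i \ D i` is nonempty (E1) and inclusionwise minimal
among the lobes of circuits having a nonempty lobe (E2). -/
def Matroid.IsPartialCircDecomp {α : Type*} (M : Matroid α) (C : ℕ → Set α) (t : ℕ) : Prop :=
  (∀ i < t, M.IsCircuitSet (C i)) ∧
  ∀ i, 1 ≤ i → i < t →
    C i \ circUnion C i ≠ ∅ ∧
    ∀ C', M.IsCircuitSet C' → C' \ circUnion C i ≠ ∅ →
      ¬ (C' \ circUnion C i ⊂ C i \ circUnion C i)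

/-- A circuit decomposition is a partial circuit decomposition covering the ground set. -/
def Matroid.IsCircDecomp {α : Type*} (M : Matroid α) (C : ℕ → Set α) (t : ℕ) : Prop :=
  M.IsPartialCircDecomp C t ∧ circUnion C t = M.E

/-- A matroid is bridgeless if every element of the ground set lies in a circuit. -/
def Matroid.Bridgeless {α : Type*} (M : Matroid α) : Prop :=
  ∀ e ∈ M.E, ∃ C, M.IsCircuitSet C ∧ e ∈ C

/-!
The forward direction holds because the circuits of a decomposition cover the ground set.
Conversely, a partial decomposition `C 0, …, C (t-1)` whose union `D` is not yet `E` can always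
be prolonged: an element of `E \ D` lies in some circuit, so among the finitely many circuits
with a nonempty lobe `C' \ D` there is one whose lobe is inclusion-minimal, and appending it
gives a longer partial decomposition covering strictly more of `E`. Iterating terminates since
`E` is finite.
-/

section circUnion

variable {α : Type*} {C C' : ℕ → Set α} {t : ℕ}

lemma mem_circUnion {x : α} : x ∈ circUnion C t ↔ ∃ i < t, x ∈ C i := by
  simp [circUnion]

lemma circUnion_congr (h : ∀ i < t, C' i = C i) : circUnion C' t = circUnion C t :=
  Set.iUnion₂_congr h

lemma circUnion_succ (C : ℕ → Set α) (t : ℕ) : circUnion C (t + 1) = circUnion C t ∪ C t :=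
  Set.biUnion_lt_succ C t

lemma circUnion_update_self (C : ℕ → Set α) (t : ℕ) (X : Set α) :
    circUnion (Function.update C t X) t = circUnion C t :=
  circUnion_congr fun _ hi ↦ Function.update_of_ne hi.ne _ _

end circUnion

namespace Matroid

variable {α : Type*} {M : Matroid α} {C : ℕ → Set α} {t : ℕ}

lemma IsCircuitSet.subset_ground {X : Set α} (hX : M.IsCircuitSet X) : X ⊆ M.E :=
  hX.1.subset_ground

lemma isPartialCircDecomp_zero (C : ℕ → Set α) : M.IsPartialCircDecomp C 0 :=
  ⟨fun _ hi ↦ absurd hi (Nat.not_lt_zero _), fun _ _ hi ↦ absurd hi (Nat.not_lt_zero _)⟩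

lemma IsPartialCircDecomp.circUnion_subset_ground (h : M.IsPartialCircDecomp C t) :
    circUnion C t ⊆ M.E := by
  intro x hx
  obtain ⟨i, hi, hxi⟩ := mem_circUnion.1 hx
  exact (h.1 i hi).subset_ground hxi

lemma IsCircDecomp.bridgeless (h : M.IsCircDecomp C t) : M.Bridgeless := by
  intro e he
  rw [← h.2] at he
  obtain ⟨i, hi, hei⟩ := mem_circUnion.1 he
  exact ⟨C i, h.1.1 i hi, hei⟩

lemma exists_isCircuitSet_minimal_lobe [M.Finite] (D : Set α) {X₀ : Set α}
    (hX₀ : M.IsCircuitSet X₀) (hX₀D : (X₀ \ D).Nonempty) :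
    ∃ X, M.IsCircuitSet X ∧ (X \ D).Nonempty ∧
      ∀ C', M.IsCircuitSet C' → (C' \ D).Nonempty → ¬ (C' \ D ⊂ X \ D) := by
  have hfin : {X | M.IsCircuitSet X ∧ (X \ D).Nonempty}.Finite :=
    M.ground_finite.finite_subsets.subset fun X hX ↦ hX.1.subset_ground
  obtain ⟨X, hmin⟩ := hfin.exists_minimalFor (· \ D) _ ⟨X₀, hX₀, hX₀D⟩
  exact ⟨X, hmin.1.1, hmin.1.2, fun C' hC' hC'D ↦ hmin.not_lt ⟨hC', hC'D⟩⟩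

lemma IsPartialCircDecomp.update (h : M.IsPartialCircDecomp C t) {X : Set α}
    (hX : M.IsCircuitSet X) (hXD : (X \ circUnion C t).Nonempty)
    (hmin : ∀ C', M.IsCircuitSet C' → (C' \ circUnion C t).Nonempty →
      ¬ (C' \ circUnion C t ⊂ X \ circUnion C t)) :
    M.IsPartialCircDecomp (Function.update C t X) (t + 1) := by
  have hagree : ∀ i < t, Function.update C t X i = C i :=
    fun _ hi ↦ Function.update_of_ne hi.ne _ _
  refine ⟨fun i hi ↦ ?_, fun i hi₁ hi ↦ ?_⟩
  · obtain hi | rfl := Nat.lt_succ_iff_lt_or_eq.1 hi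
    · exact hagree i hi ▸ h.1 i hi
    · rwa [Function.update_self]
  · obtain hi | rfl := Nat.lt_succ_iff_lt_or_eq.1 hi
    · rw [hagree i hi, circUnion_congr fun j hj ↦ hagree j (hj.trans hi)]
      exact h.2 i hi₁ hi
    · rw [Function.update_self, circUnion_update_self]
      exact ⟨hXD.ne_empty, fun C' hC' hC'D ↦ hmin C' hC' (Set.nonempty_iff_ne_empty.2 hC'D)⟩

lemma IsPartialCircDecomp.exists_succ [M.Finite] (hb : M.Bridgeless)
    (h : M.IsPartialCircDecomp C t) (hne : circUnion C t ≠ M.E) :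
    ∃ X, M.IsPartialCircDecomp (Function.update C t X) (t + 1) ∧
      M.E \ circUnion (Function.update C t X) (t + 1) ⊂ M.E \ circUnion C t := by
  obtain ⟨e, he, heD⟩ := Set.exists_of_ssubset (h.circUnion_subset_ground.ssubset_of_ne hne)
  obtain ⟨X₀, hX₀, heX₀⟩ := hb e he
  obtain ⟨X, hX, ⟨f, hfX, hfD⟩, hmin⟩ :=
    exists_isCircuitSet_minimal_lobe (circUnion C t) hX₀ ⟨e, heX₀, heD⟩
  refine ⟨X, h.update hX ⟨f, hfX, hfD⟩ hmin, ?_⟩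
  rw [circUnion_succ, Function.update_self, circUnion_update_self]
  exact (Set.ssubset_iff_of_subset (Set.sdiff_subset_sdiff_right Set.subset_union_left)).2
    ⟨f, ⟨hX.subset_ground hfX, hfD⟩, fun hf ↦ hf.2 (Or.inr hfX)⟩

lemma IsPartialCircDecomp.exists_isCircDecomp_extension [M.Finite] (hb : M.Bridgeless)
    (h : M.IsPartialCircDecomp C t) :
    ∃ (C' : ℕ → Set α) (t' : ℕ), t ≤ t' ∧ (∀ i < t, C' i = C i) ∧ M.IsCircDecomp C' t' := by
  induction hn : (M.E \ circUnion C t).ncard using Nat.strong_induction_on generalizing C t with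
  | _ n ih =>
  by_cases hcov : circUnion C t = M.E
  · exact ⟨C, t, le_rfl, fun _ _ ↦ rfl, h, hcov⟩
  obtain ⟨X, hX, hshrink⟩ := h.exists_succ hb hcov
  obtain ⟨C', t', ht', hC', hdecomp⟩ :=
    ih _ (hn ▸ Set.ncard_lt_ncard hshrink M.ground_finite.sdiff) hX rfl
  exact ⟨C', t', by omega, fun i hi ↦ (hC' i (by omega)).trans (Function.update_of_ne hi.ne _ _),
    hdecomp⟩

end Matroid

/-- A finite matroid has a circuit decomposition if and only if it is bridgeless;
moreover, if it is bridgeless then every partial circuit decomposition can be extended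
to a circuit decomposition. -/
theorem circDecomp_iff_bridgeless {α : Type*} (M : Matroid α) [M.Finite] :
    ((∃ C : ℕ → Set α, ∃ t : ℕ, M.IsCircDecomp C t) ↔ M.Bridgeless) ∧
    (M.Bridgeless → ∀ (C : ℕ → Set α) (t : ℕ), M.IsPartialCircDecomp C t →
      ∃ (C' : ℕ → Set α) (t' : ℕ), t ≤ t' ∧ (∀ i < t, C' i = C i) ∧
        M.IsCircDecomp C' t') := by
  refine ⟨⟨fun ⟨_, _, h⟩ ↦ h.bridgeless, fun hb ↦ ?_⟩,
    fun hb _ _ h ↦ h.exists_isCircDecomp_extension hb⟩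
  obtain ⟨C', t', -, -, h⟩ :=
    (Matroid.isPartialCircDecomp_zero (M := M) fun _ ↦ ∅).exists_isCircDecomp_extension hb
  exact ⟨C', t', h⟩
end

section
/- Let G = (V,E) be an R_d-circuit for d ≥ 2 (using that min degree of circuits is ≥ d+1 and K_{d+2} is the unique (d+1)-regular circuit). Then |E| ≤ (d+1)|V| − binom(d+2,2) − ((d+1)/(d−1)) k_d(G), with equality if and only if G = K_{d+2}. -/
open Module

/-- The row of the `d`-dimensional rigidity matrix corresponding to the edge `uv`, at the
realization `p : V → ℝ^d`: it has `p u - p v` in the `d` columns of `u`, `p v - p u` in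
the `d` columns of `v`, and zeros elsewhere. -/
def rigidityRow {V : Type*} [DecidableEq V] (d : ℕ) (p : V → Fin d → ℝ) :
    Sym2 V → (V × Fin d → ℝ) :=
  Sym2.lift ⟨fun u v x =>
      if x.1 = u then p u x.2 - p v x.2 else if x.1 = v then p v x.2 - p u x.2 else 0, by
    intro u v
    funext x
    by_cases huv : u = v
    · subst huv; rfl
    · by_cases h1 : x.1 = u <;> by_cases h2 : x.1 = v
      · exact absurd (h1 ▸ h2) huv
      · simp [h1, h2, huv, Ne.symm huv]
      · simp [h1, h2, huv, Ne.symm huv]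
      · simp [h1, h2]⟩

/-- The rank, in the `d`-dimensional generic rigidity matroid on vertex set `V`, of a set
`A` of edges: the maximum, over all realizations `p : V → ℝ^d`, of the rank of the
corresponding set of rigidity matrix rows. -/
noncomputable def genRigidityRank {V : Type*} [DecidableEq V] (d : ℕ) (A : Set (Sym2 V)) :
    ℕ :=
  ⨆ p : V → Fin d → ℝ, finrank ℝ (Submodule.span ℝ (rigidityRow d p '' A))

/-- A finite set `A` of edges is a circuit of the `d`-dimensional generic rigidity matroid
if its rank is `|A| - 1` and every proper subset is independent. -/
def IsRdCircuitSet {V : Type*} [DecidableEq V] (d : ℕ) (A : Set (Sym2 V)) : Prop :=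
  A.Finite ∧ genRigidityRank d A + 1 = A.ncard ∧
    ∀ B ⊂ A, genRigidityRank d B = B.ncard

/-- A graph `G` is an `R_d`-circuit if its edge set is a circuit of the `d`-dimensional
generic rigidity matroid. -/
def SimpleGraph.IsRdCircuit {V : Type*} [DecidableEq V] (d : ℕ) (G : SimpleGraph V) :
    Prop :=
  IsRdCircuitSet d G.edgeSet

/-- `k_d(G) = d|V| - binom(d+1)(2) - r_d(E)`, the number of degrees of freedom of `G`
in `ℝ^d` (an integer). -/
noncomputable def degFreedom {V : Type*} [DecidableEq V] [Fintype V] (d : ℕ)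
    (G : SimpleGraph V) : ℤ :=
  d * Fintype.card V - (d + 1).choose 2 - genRigidityRank d G.edgeSet

lemma aux_edgeFinset_ncard {V : Type*} [DecidableEq V] [Fintype V]
    (G : SimpleGraph V) [DecidableRel G.Adj] :
    G.edgeSet.ncard = G.edgeFinset.card := by
  rw [← SimpleGraph.coe_edgeFinset, Set.ncard_coe_finset]

lemma aux_iso_data {V : Type*} [DecidableEq V] [Fintype V]
    (d : ℕ) (G : SimpleGraph V) [DecidableRel G.Adj]
    (e : G ≃g (⊤ : SimpleGraph (Fin (d + 2)))) :
    G.edgeFinset.card = (d + 2).choose 2 ∧ Fintype.card V = d + 2 := by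
  constructor
  · have h1 : Nat.card G.edgeSet = Nat.card (⊤ : SimpleGraph (Fin (d+2))).edgeSet :=
      Nat.card_congr e.mapEdgeSet
    rw [Nat.card_coe_set_eq, Nat.card_coe_set_eq] at h1
    have h2 := aux_edgeFinset_ncard G
    have h3 := aux_edgeFinset_ncard (⊤ : SimpleGraph (Fin (d+2)))
    have h4 := SimpleGraph.card_edgeFinset_top_eq_card_choose_two (V := Fin (d+2))
    simp only [Fintype.card_fin] at h4
    omega
  · simpa using e.card_eq

/-- For an `R_d`-circuit `G = (V, E)` with `d ≥ 2` (using that `R_d`-circuits have minimum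
degree `≥ d + 1` and that `K_{d+2}` is the unique `(d+1)`-regular `R_d`-circuit),
`|E| ≤ (d+1)|V| - binom(d+2)(2) - ((d+1)/(d-1)) k_d(G)`, with equality iff `G = K_{d+2}`. -/
theorem rd_circuit_edge_upper_bound {V : Type*} [DecidableEq V] [Fintype V]
    (d : ℕ) (hd : 2 ≤ d) (G : SimpleGraph V) [DecidableRel G.Adj]
    (hG : G.IsRdCircuit d)
    (hdeg : ∀ v : V, d + 1 ≤ G.degree v)
    (hreg : (∀ v : V, G.degree v = d + 1) →
      Nonempty (G ≃g (⊤ : SimpleGraph (Fin (d + 2))))) :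
    (G.edgeFinset.card : ℚ) ≤
        ((d : ℚ) + 1) * Fintype.card V - ((d + 2).choose 2 : ℚ) -
          (((d : ℚ) + 1) / ((d : ℚ) - 1)) * (degFreedom d G : ℚ) ∧
      ((G.edgeFinset.card : ℚ) =
          ((d : ℚ) + 1) * Fintype.card V - ((d + 2).choose 2 : ℚ) -
            (((d : ℚ) + 1) / ((d : ℚ) - 1)) * (degFreedom d G : ℚ) ↔
        Nonempty (G ≃g (⊤ : SimpleGraph (Fin (d + 2))))) := by
  have hG' : IsRdCircuitSet d G.edgeSet := hG
  have hEr : genRigidityRank d G.edgeSet + 1 = G.edgeFinset.card := by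
    rw [hG'.2.1, aux_edgeFinset_ncard]
  have hsum : ∑ v, G.degree v = 2 * G.edgeFinset.card := G.sum_degrees_eq_twice_card_edges
  have hconst : ∑ _v : V, (d + 1) = Fintype.card V * (d + 1) := by
    rw [Finset.sum_const, Finset.card_univ, smul_eq_mul]
  have hlow : Fintype.card V * (d + 1) ≤ ∑ v, G.degree v := by
    rw [← hconst]
    exact Finset.sum_le_sum fun v _ => hdeg v
  have hNE : (d + 1) * Fintype.card V ≤ 2 * G.edgeFinset.card := by
    calc (d + 1) * Fintype.card V = Fintype.card V * (d + 1) := Nat.mul_comm _ _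
      _ ≤ ∑ v, G.degree v := hlow
      _ = 2 * G.edgeFinset.card := hsum
  have hiffreg : 2 * G.edgeFinset.card = (d + 1) * Fintype.card V →
      ∀ v, G.degree v = d + 1 := by
    intro h
    have heq : ∑ _v : V, (d + 1) = ∑ v, G.degree v := by
      rw [hconst, hsum, h, Nat.mul_comm]
    have h2 := (Finset.sum_eq_sum_iff_of_le (fun v _ => hdeg v)).mp heq
    exact fun v => (h2 v (Finset.mem_univ v)).symm
  -- rational setup
  have hdQ : (2 : ℚ) ≤ (d : ℚ) := by exact_mod_cast hd
  have hdpos : (0 : ℚ) < (d : ℚ) - 1 := by linarith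
  have hKq : (degFreedom d G : ℚ) =
      (d : ℚ) * Fintype.card V - ((d + 1).choose 2 : ℚ) - (genRigidityRank d G.edgeSet : ℚ) := by
    simp only [degFreedom]
    push_cast
    ring
  have hc1 : ((d + 1).choose 2 : ℚ) = ((d : ℚ) + 1) * d / 2 := by
    rw [Nat.cast_choose_two]
    push_cast
    ring
  have hc2 : ((d + 2).choose 2 : ℚ) = ((d : ℚ) + 2) * ((d : ℚ) + 1) / 2 := by
    rw [Nat.cast_choose_two]
    push_cast
    ring
  have hEq : (G.edgeFinset.card : ℚ) = (genRigidityRank d G.edgeSet : ℚ) + 1 := by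
    exact_mod_cast hEr.symm
  have hD : (((d : ℚ) + 1) * Fintype.card V - ((d + 2).choose 2 : ℚ) -
        (((d : ℚ) + 1) / ((d : ℚ) - 1)) * (degFreedom d G : ℚ)) - (G.edgeFinset.card : ℚ) =
      (2 * (G.edgeFinset.card : ℚ) - ((d : ℚ) + 1) * Fintype.card V) / ((d : ℚ) - 1) := by
    rw [eq_div_iff hdpos.ne', hKq, hc1, hc2, hEq]
    field_simp
    ring
  have hNEq : ((d : ℚ) + 1) * Fintype.card V ≤ 2 * (G.edgeFinset.card : ℚ) := by
    exact_mod_cast hNE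
  have h0 : (0 : ℚ) ≤ (((d : ℚ) + 1) * Fintype.card V - ((d + 2).choose 2 : ℚ) -
      (((d : ℚ) + 1) / ((d : ℚ) - 1)) * (degFreedom d G : ℚ)) - (G.edgeFinset.card : ℚ) := by
    rw [hD]
    exact div_nonneg (by linarith) hdpos.le
  refine ⟨by linarith, ?_, ?_⟩
  · intro heq
    have h1 : (2 * (G.edgeFinset.card : ℚ) - ((d : ℚ) + 1) * Fintype.card V) / ((d : ℚ) - 1)
        = 0 := by rw [← hD]; linarith
    have h2 : 2 * (G.edgeFinset.card : ℚ) = ((d : ℚ) + 1) * Fintype.card V := by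
      rw [div_eq_zero_iff] at h1
      rcases h1 with h1 | h1
      · linarith
      · exact absurd h1 hdpos.ne'
    have h3 : 2 * G.edgeFinset.card = (d + 1) * Fintype.card V := by exact_mod_cast h2
    exact hreg (hiffreg h3)
  · rintro ⟨e⟩
    obtain ⟨he1, he2⟩ := aux_iso_data d G e
    have hE2 : (G.edgeFinset.card : ℚ) = ((d + 2).choose 2 : ℚ) := by exact_mod_cast he1
    have hN2 : (Fintype.card V : ℚ) = (d : ℚ) + 2 := by exact_mod_cast he2
    have h2 : 2 * (G.edgeFinset.card : ℚ) - ((d : ℚ) + 1) * Fintype.card V = 0 := by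
      rw [hE2, hc2, hN2]; ring
    have h3 := hD
    rw [h2, zero_div] at h3
    linarith
end
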